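/- If V is a ring in which every right V-module is flat, then for every a in V there exists x in V such that a = a*x*a. -/

import Mathlib

/-!
Put `J = aV`, `I = Va` and `M = V / J`. Flatness of `M` makes `M ⊗_V I → M ⊗_V V` injective, and
this map sends `[1] ⊗ a` to `[1] ⊗ a·1 = [a] ⊗ 1 = 0`, so `[1] ⊗ a = 0` in `M ⊗_V I`. On the other
hand `([v], i) ↦ v i mod aVa` is a well-defined balanced map `M × I → V / aVa`, since `J I ⊆ aVa`.
Applying it to `[1] ⊗ a` gives `a ∈ aVa`.
-/

open scoped TensorProduct
open MulOpposite

/-- The balancing relations defining the tensor product `M ⊗_V N` of a right `V`-module `M`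
and a left `V`-module `N` over a (possibly noncommutative) ring `V`, as a quotient of the
tensor product of abelian groups `M ⊗[ℤ] N`. -/
def tensorRel (V : Type) [Ring V] (M N : Type) [AddCommGroup M] [Module Vᵐᵒᵖ M]
    [AddCommGroup N] [Module V N] : Submodule ℤ (M ⊗[ℤ] N) :=
  Submodule.span ℤ
    {z | ∃ (m : M) (a : V) (n : N), z = (op a • m) ⊗ₜ[ℤ] n - m ⊗ₜ[ℤ] (a • n)}

/-- The tensor product `M ⊗_V N` of a right `V`-module and a left `V`-module. -/
abbrev NCTensor (V : Type) [Ring V] (M N : Type) [AddCommGroup M] [Module Vᵐᵒᵖ M]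
    [AddCommGroup N] [Module V N] : Type :=
  (M ⊗[ℤ] N) ⧸ tensorRel V M N

/-- The map `M ⊗_V N → M ⊗_V N'` induced by a map `f : N → N'` of left `V`-modules. -/
noncomputable def NCTensor.map (V : Type) [Ring V] (M : Type) [AddCommGroup M]
    [Module Vᵐᵒᵖ M] {N N' : Type} [AddCommGroup N] [Module V N] [AddCommGroup N']
    [Module V N'] (f : N →ₗ[V] N') : NCTensor V M N →ₗ[ℤ] NCTensor V M N' :=
  Submodule.mapQ _ _
    (TensorProduct.map LinearMap.id f.toAddMonoidHom.toIntLinearMap)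
    (by
      rw [tensorRel, Submodule.span_le]
      rintro z ⟨m, a, n, rfl⟩
      simp only [SetLike.mem_coe, Submodule.mem_comap, map_sub, TensorProduct.map_tmul,
        LinearMap.id_coe, id_eq, AddMonoidHom.coe_toIntLinearMap, LinearMap.toAddMonoidHom_coe]
      exact Submodule.subset_span ⟨m, a, f n, by
        erw [map_sub, TensorProduct.map_tmul, TensorProduct.map_tmul]; simp [map_smul]⟩)

/-- A right `V`-module `M` is flat if tensoring with `M` preserves injectivity of maps of
left `V`-modules (equivalently, the functor `M ⊗_V (-)` is exact). -/
def RightFlat (V : Type) [Ring V] (M : Type) [AddCommGroup M] [Module Vᵐᵒᵖ M] : Prop :=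
  ∀ (N N' : Type) [AddCommGroup N] [Module V N] [AddCommGroup N'] [Module V N']
    (f : N →ₗ[V] N'), Function.Injective f → Function.Injective (NCTensor.map V M f)

namespace NCTensor

variable (V : Type) [Ring V] {M N P : Type} [AddCommGroup M] [Module Vᵐᵒᵖ M]
  [AddCommGroup N] [Module V N] [AddCommGroup P]

def tmul (m : M) (n : N) : NCTensor V M N :=
  Submodule.Quotient.mk (m ⊗ₜ[ℤ] n)

theorem smul_tmul (a : V) (m : M) (n : N) : tmul V (op a • m) n = tmul V m (a • n) :=
  (Submodule.Quotient.eq _).mpr (Submodule.subset_span ⟨m, a, n, rfl⟩)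

variable {V}

noncomputable def lift (B : M →ₗ[ℤ] N →ₗ[ℤ] P) (hB : ∀ m (a : V) n, B (op a • m) n = B m (a • n)) :
    NCTensor V M N →ₗ[ℤ] P :=
  (tensorRel V M N).liftQ (TensorProduct.lift B) <| by
    rw [tensorRel, Submodule.span_le]
    rintro _ ⟨m, a, n, rfl⟩
    change TensorProduct.lift B (_ - _) = 0
    rw [map_sub, TensorProduct.lift.tmul, TensorProduct.lift.tmul, hB, sub_self]

theorem lift_tmul (B : M →ₗ[ℤ] N →ₗ[ℤ] P) (hB : ∀ m (a : V) n, B (op a • m) n = B m (a • n))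
    (m : M) (n : N) : lift B hB (tmul V m n) = B m n :=
  TensorProduct.lift.tmul m n

end NCTensor

section

variable {V : Type} [Ring V] (J : Submodule Vᵐᵒᵖ V) (I : Submodule V V) (K : AddSubgroup V)

noncomputable def quotientMulMap (hJI : ∀ j ∈ J, ∀ i ∈ I, j * i ∈ K) :
    V ⧸ J →ₗ[ℤ] I →ₗ[ℤ] V ⧸ K :=
  (J.restrictScalars ℤ).liftQ
    (((LinearMap.mul ℤ V).compr₂ (QuotientAddGroup.mk' K).toIntLinearMap).compl₂
      (I.subtype.restrictScalars ℤ)) <| by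
    intro j hj
    ext i
    simpa [QuotientAddGroup.eq_zero_iff] using hJI j hj i i.2

theorem quotientMulMap_mk (hJI : ∀ j ∈ J, ∀ i ∈ I, j * i ∈ K) (v : V) (i : I) :
    quotientMulMap J I K hJI (Submodule.Quotient.mk v) i = QuotientAddGroup.mk (v * i) :=
  rfl

theorem quotientMulMap_balanced (hJI : ∀ j ∈ J, ∀ i ∈ I, j * i ∈ K) (m : V ⧸ J) (a : V) (i : I) :
    quotientMulMap J I K hJI (op a • m) i = quotientMulMap J I K hJI m (a • i) := by
  obtain ⟨v, rfl⟩ := Submodule.Quotient.mk_surjective J m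
  rw [← Submodule.Quotient.mk_smul, op_smul_eq_mul, quotientMulMap_mk, quotientMulMap_mk,
    Submodule.coe_smul, smul_eq_mul, mul_assoc]

/-- The nontrivial half of the criterion `J ∩ I = J I` for flatness of `V / J`. -/
theorem mem_of_rightFlat_quotient (hflat : RightFlat V (V ⧸ J))
    (hJI : ∀ j ∈ J, ∀ i ∈ I, j * i ∈ K) {x : V} (hxJ : x ∈ J) (hxI : x ∈ I) : x ∈ K := by
  have hvanish : NCTensor.map V (V ⧸ J) I.subtype
      (NCTensor.tmul V (Submodule.Quotient.mk 1 : V ⧸ J) (⟨x, hxI⟩ : I)) = 0 := by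
    have hx : op x • (Submodule.Quotient.mk 1 : V ⧸ J) = 0 := by
      rw [← Submodule.Quotient.mk_smul, op_smul_eq_mul, one_mul,
        Submodule.Quotient.mk_eq_zero]
      exact hxJ
    change NCTensor.tmul V (Submodule.Quotient.mk 1 : V ⧸ J) x = 0
    rw [← mul_one x, ← smul_eq_mul, ← NCTensor.smul_tmul, hx]
    exact congrArg _ (TensorProduct.zero_tmul _ _)
  have hzero : NCTensor.tmul V (Submodule.Quotient.mk 1 : V ⧸ J) (⟨x, hxI⟩ : I) = 0 :=
    hflat _ _ I.subtype I.injective_subtype (by rw [hvanish, map_zero])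
  have hlift := congrArg (NCTensor.lift _ (quotientMulMap_balanced J I K hJI)) hzero
  rwa [NCTensor.lift_tmul, quotientMulMap_mk, map_zero, one_mul,
    QuotientAddGroup.eq_zero_iff] at hlift

end

def sandwichSubgroup {V : Type} [Ring V] (a : V) : AddSubgroup V where
  carrier := {v | ∃ x : V, v = a * x * a}
  zero_mem' := ⟨0, by simp⟩
  add_mem' := by
    rintro u v ⟨x, rfl⟩ ⟨y, rfl⟩
    exact ⟨x + y, by rw [mul_add, add_mul]⟩
  neg_mem' := by
    rintro v ⟨x, rfl⟩
    exact ⟨-x, by rw [mul_neg, neg_mul]⟩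

/-- If `V` is a ring in which every right `V`-module is flat, then for every
`a ∈ V` there exists `x ∈ V` with `a = a * x * a`. -/
theorem stmt_1 (V : Type) [Ring V]
    (hflat : ∀ (M : Type) [AddCommGroup M] [Module Vᵐᵒᵖ M], RightFlat V M) :
    ∀ a : V, ∃ x : V, a = a * x * a := by
  intro a
  refine mem_of_rightFlat_quotient (Submodule.span Vᵐᵒᵖ {a}) (Submodule.span V {a})
    (sandwichSubgroup a) (hflat _) ?_ (Submodule.mem_span_singleton_self a)
    (Submodule.mem_span_singleton_self a)
  intro j hj i hi
  obtain ⟨y, rfl⟩ := Submodule.mem_span_singleton.mp hj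
  obtain ⟨z, rfl⟩ := Submodule.mem_span_singleton.mp hi
  exact ⟨y.unop * z, by simp only [MulOpposite.smul_eq_mul_unop, smul_eq_mul, mul_assoc]⟩
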